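/- Let Γ be a finite connected simple graph with vertex set V, let 𝒯 and 𝒯̃ be maximal tubings of Γ, and let w and w̃ be their weight vectors. If T is a tube belonging to both 𝒯 and 𝒯̃, then Σ_{v ∈ T} w(v) = Σ_{v ∈ T} w̃(v); that is, the total weight of a tube of a maximal tubing is completely determined by the number of vertices in the tube. -/

import Mathlib

variable {V : Type*} [Fintype V] [DecidableEq V]

/-- A tube of a simple graph: a nonempty proper subset of vertices whose
induced subgraph is connected. -/
def IsTube (G : SimpleGraph V) (T : Finset V) : Prop :=
  T.Nonempty ∧ T ≠ Finset.univ ∧ (G.induce (T : Set V)).Connected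

/-- A tubing: a set of tubes, pairwise either properly nested or disjoint with
no edge between them. -/
def IsTubing (G : SimpleGraph V) (𝒯 : Finset (Finset V)) : Prop :=
  (∀ T ∈ 𝒯, IsTube G T) ∧
  ∀ T ∈ 𝒯, ∀ T' ∈ 𝒯, T ≠ T' →
    T ⊂ T' ∨ T' ⊂ T ∨
      ((∀ v ∈ T, v ∉ T') ∧ ∀ u ∈ T, ∀ v ∈ T', ¬ G.Adj u v)

/-- A maximal tubing: one not properly contained in any other tubing. -/
def IsMaxTubing (G : SimpleGraph V) (𝒯 : Finset (Finset V)) : Prop :=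
  IsTubing G 𝒯 ∧ ∀ 𝒯' : Finset (Finset V), IsTubing G 𝒯' → 𝒯 ⊆ 𝒯' → 𝒯' = 𝒯

/-- `w` is the weight vector of the maximal tubing `𝒯`: for each vertex `v`,
if the minimal element `T` of `𝒯 ∪ {univ}` containing `v` is the singleton
`{v}` then `w v = 0`, and otherwise (`|T| ≥ 2`)
`w v = 3^(|T|-2) - ∑_{v' ∈ T, v' ≠ v} w v'`. -/
def IsWeightVector (𝒯 : Finset (Finset V)) (w : V → ℤ) : Prop :=
  ∀ v : V, ∀ T ∈ insert Finset.univ 𝒯, v ∈ T →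
    (∀ S ∈ insert Finset.univ 𝒯, v ∈ S → T ⊆ S) →
    (T = {v} → w v = 0) ∧
    (2 ≤ T.card → w v = 3 ^ (T.card - 2) - ∑ v' ∈ T.erase v, w v')

/-!
A tube `T` of a tubing has a vertex `v` lying in no smaller tube of the tubing: otherwise a maximal
smaller tube `A` would be joined by an edge of the connected `T` to a vertex outside it, and the
tube containing that vertex could be neither nested with `A` nor separated from it. So `T` is the
minimal tube containing `v`, and the recursion defining `w v` says exactly that the weights over
`T` add up to `3 ^ (|T| - 2)` (to `0` when `|T| = 1`), a number depending on `|T|` alone.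
-/

theorem SimpleGraph.exists_adj_of_induce_preconnected {α : Type*} {G : SimpleGraph α}
    {T A : Set α} (hT : (G.induce T).Preconnected) (hAT : A ⊆ T) {a b : α} (ha : a ∈ A)
    (hb : b ∈ T) (hbA : b ∉ A) : ∃ x ∈ A, ∃ y ∈ T, y ∉ A ∧ G.Adj x y := by
  obtain ⟨p⟩ := hT ⟨a, hAT ha⟩ ⟨b, hb⟩
  obtain ⟨d, -, hx, hy⟩ := p.exists_boundary_dart {x | x.1 ∈ A} ha hbA
  exact ⟨_, hx, _, d.snd.2, hy, d.adj⟩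

namespace IsTubing

variable {G : SimpleGraph V} {𝒯 : Finset (Finset V)} {T : Finset V}

theorem exists_mem_not_mem_of_ssubset (h𝒯 : IsTubing G 𝒯) (hT : T ∈ 𝒯) :
    ∃ v ∈ T, ∀ S ∈ 𝒯, S ⊂ T → v ∉ S := by
  by_contra! hcover
  obtain ⟨⟨v, hv⟩, -, hconn⟩ := h𝒯.1 T hT
  obtain ⟨S₀, hS₀, hS₀T, -⟩ := hcover v hv
  obtain ⟨A, hAmem, hAmax⟩ :=
    (𝒯.filter (· ⊂ T)).exists_maximal ⟨S₀, Finset.mem_filter.mpr ⟨hS₀, hS₀T⟩⟩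
  obtain ⟨hA, hAT⟩ := Finset.mem_filter.mp hAmem
  obtain ⟨a, ha⟩ := (h𝒯.1 A hA).1
  obtain ⟨b, hbT, hbA⟩ := Finset.exists_of_ssubset hAT
  obtain ⟨x, hxA, y, hyT, hyA, hxy⟩ :=
    G.exists_adj_of_induce_preconnected hconn.preconnected (Finset.coe_subset.mpr hAT.subset)
      (Finset.mem_coe.mpr ha) (Finset.mem_coe.mpr hbT) (by simpa using hbA)
  obtain ⟨S, hS, hST, hyS⟩ := hcover y hyT
  have hAS : A ≠ S := by rintro rfl; exact hyA hyS
  rcases h𝒯.2 A hA S hS hAS with hlt | hlt | ⟨-, hnadj⟩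
  · exact hAS (hlt.subset.antisymm (hAmax (Finset.mem_filter.mpr ⟨hS, hST⟩) hlt.subset))
  · exact hyA (hlt.subset hyS)
  · exact hnadj x hxA y hyS hxy

theorem subset_of_mem_of_forall_ssubset_not_mem (h𝒯 : IsTubing G 𝒯) (hT : T ∈ 𝒯) {v : V}
    (hv : v ∈ T) (hvmin : ∀ S ∈ 𝒯, S ⊂ T → v ∉ S) {S : Finset V}
    (hS : S ∈ insert Finset.univ 𝒯) (hvS : v ∈ S) : T ⊆ S := by
  obtain rfl | hS := Finset.mem_insert.mp hS
  · exact Finset.subset_univ T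
  obtain rfl | hTS := eq_or_ne T S
  · exact subset_rfl
  rcases h𝒯.2 T hT S hS hTS with hlt | hlt | ⟨hdisj, -⟩
  · exact hlt.subset
  · exact absurd hvS (hvmin S hS hlt)
  · exact absurd hvS (hdisj v hv)

end IsTubing

theorem IsWeightVector.sum_eq_of_isLeast {𝒯 : Finset (Finset V)} {w : V → ℤ}
    (hw : IsWeightVector 𝒯 w) {T : Finset V} {v : V}
    (hT : IsLeast {S | S ∈ insert Finset.univ 𝒯 ∧ v ∈ S} T) :
    ∑ u ∈ T, w u = if 2 ≤ T.card then 3 ^ (T.card - 2) else 0 := by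
  obtain ⟨⟨hT, hv⟩, hmin⟩ := hT
  have hwv := hw v T hT hv fun S hS hvS => hmin ⟨hS, hvS⟩
  split_ifs with hcard
  · rw [← Finset.add_sum_erase T w hv, hwv.2 hcard, sub_add_cancel]
  · have hTv : T = {v} := Finset.eq_singleton_iff_unique_mem.mpr
      ⟨hv, fun u hu => Finset.card_le_one.mp (by omega) u hu v hv⟩
    rw [hTv, Finset.sum_singleton, hwv.1 hTv]

theorem IsTubing.sum_weight_eq {G : SimpleGraph V} {𝒯 : Finset (Finset V)}
    (h𝒯 : IsTubing G 𝒯) {w : V → ℤ} (hw : IsWeightVector 𝒯 w) {T : Finset V} (hT : T ∈ 𝒯) :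
    ∑ v ∈ T, w v = if 2 ≤ T.card then 3 ^ (T.card - 2) else 0 := by
  obtain ⟨v, hv, hvmin⟩ := h𝒯.exists_mem_not_mem_of_ssubset hT
  exact hw.sum_eq_of_isLeast ⟨⟨Finset.mem_insert_of_mem hT, hv⟩,
    fun S ⟨hS, hvS⟩ => h𝒯.subset_of_mem_of_forall_ssubset_not_mem hT hv hvmin hS hvS⟩

theorem weight_sum_of_common_tube_eq_general
    (G : SimpleGraph V)
    (𝒯 𝒯' : Finset (Finset V)) (h : IsMaxTubing G 𝒯) (h' : IsMaxTubing G 𝒯')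
    (w w' : V → ℤ) (hw : IsWeightVector 𝒯 w) (hw' : IsWeightVector 𝒯' w')
    (T : Finset V) (hT : T ∈ 𝒯) (hT' : T ∈ 𝒯') :
    ∑ v ∈ T, w v = ∑ v ∈ T, w' v := by
  rw [h.1.sum_weight_eq hw hT, h'.1.sum_weight_eq hw' hT']

theorem weight_sum_of_common_tube_eq
    (G : SimpleGraph V) (hG : G.Connected)
    (𝒯 𝒯' : Finset (Finset V)) (h : IsMaxTubing G 𝒯) (h' : IsMaxTubing G 𝒯')
    (w w' : V → ℤ) (hw : IsWeightVector 𝒯 w) (hw' : IsWeightVector 𝒯' w')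
    (T : Finset V) (hT : T ∈ 𝒯) (hT' : T ∈ 𝒯') :
    ∑ v ∈ T, w v = ∑ v ∈ T, w' v :=
  weight_sum_of_common_tube_eq_general G 𝒯 𝒯' h h' w w' hw hw' T hT hT'
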